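/- arXiv:0812.0804 — 3 statements merged into one kernel-verified Lean document; each statement's English description precedes it below -/
import Mathlib

section
/- Frobenius reciprocity for the fusion rules: for all words x, y, z ∈ I one has m(z; x̄, y) = m(y; x, z). -/
open Filter Topology MeasureTheory

/-- Words in the free monoid on two letters `α = true`, `β = false`. -/
abbrev Word := List Bool

/-- Conjugation: reverse the word and swap the two letters. -/
def wconj (x : Word) : Word := x.reverse.map (fun b => !b)

/-- Fusion multiplicity `m(z; x, y)`: the number of triples `(x₀, w, y₀)` with
`x = x₀w`, `y = w̄y₀` and `z = x₀y₀`. -/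
def fm (x y z : Word) : ℕ :=
  ((Finset.range (x.length + 1)).filter (fun k =>
    wconj (x.drop k) <+: y ∧ z = x.take k ++ y.drop (x.length - k))).card

/-- Maximal alternating blocks of a word. -/
def blocks : Word → List Word
  | [] => []
  | a :: rest =>
    match blocks rest with
    | [] => [[a]]
    | b :: bs => if b.head? = some a then [a] :: b :: bs else (a :: b) :: bs

/-- The quantum integer `[n]_q = (qⁿ - q⁻ⁿ)/(q - q⁻¹)`. -/
noncomputable def qnum (q : ℝ) (n : ℕ) : ℝ := (q ^ n - q⁻¹ ^ n) / (q - q⁻¹)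

/-- Quantum dimension `dim_q(x) = ∏ᵢ [|xᵢ|+1]_q` over the maximal alternating blocks. -/
noncomputable def dimq (q : ℝ) (x : Word) : ℝ :=
  ((blocks x).map (fun b => qnum q (b.length + 1))).prod

/-- Classical dimension `dim₁(x) = ∏ᵢ (|xᵢ|+1)` over the maximal alternating blocks. -/
def dim1 (x : Word) : ℕ := ((blocks x).map (fun b => b.length + 1)).prod

/-! A triple `(x₀, w, y₀)` counted by `m(z; x̄, y)` yields the triple `(w̄, x̄₀, y₀)` counted by
`m(y; x, z)`, because `x̄ = x₀w` iff `x = w̄x̄₀`: both triples say that `y` and `z` share the tail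
`y₀` after the heads `w̄` and `x₀`. On split positions this bijection is `k ↦ |x| - k`. -/

namespace List

theorem isPrefix_and_eq_append_drop_iff {α : Type*} {u v y z : List α} :
    (u <+: y ∧ z = v ++ y.drop u.length) ↔ ∃ t, y = u ++ t ∧ z = v ++ t := by
  constructor
  · rintro ⟨⟨t, rfl⟩, rfl⟩
    exact ⟨t, rfl, by simp⟩
  · rintro ⟨t, rfl, rfl⟩
    exact ⟨prefix_append u t, by simp⟩

theorem isPrefix_and_eq_append_drop_comm {α : Type*} {u v y z : List α} :
    (u <+: y ∧ z = v ++ y.drop u.length) ↔ (v <+: z ∧ y = u ++ z.drop v.length) := by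
  rw [isPrefix_and_eq_append_drop_iff, isPrefix_and_eq_append_drop_iff]
  exact exists_congr fun _ => and_comm

end List

@[simp]
theorem wconj_wconj (x : Word) : wconj (wconj x) = x := by
  simp [wconj, Function.comp_def]

@[simp]
theorem length_wconj (x : Word) : (wconj x).length = x.length := by
  simp [wconj]

theorem drop_wconj (x : Word) (k : ℕ) : (wconj x).drop k = wconj (x.take (x.length - k)) := by
  simp [wconj, List.drop_reverse]

theorem take_wconj (x : Word) (k : ℕ) : (wconj x).take k = wconj (x.drop (x.length - k)) := by
  simp [wconj, List.take_reverse]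

theorem fusion_split_wconj_iff (x y z : Word) (k : ℕ) :
    (wconj ((wconj x).drop k) <+: y ∧ z = (wconj x).take k ++ y.drop (x.length - k)) ↔
      (wconj (x.drop (x.length - k)) <+: z ∧
        y = x.take (x.length - k) ++ z.drop (x.length - (x.length - k))) := by
  have h := List.isPrefix_and_eq_append_drop_comm (y := y) (z := z)
    (u := x.take (x.length - k)) (v := wconj (x.drop (x.length - k)))
  have hu : (x.take (x.length - k)).length = x.length - k := by simp
  have hv : (wconj (x.drop (x.length - k))).length = x.length - (x.length - k) := by simp
  rw [hu, hv] at h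
  rwa [drop_wconj, take_wconj, wconj_wconj]

/-- Frobenius reciprocity for the fusion rules: `m(z; x̄, y) = m(y; x, z)`. -/
theorem fusion_frobenius (x y z : Word) : fm (wconj x) y z = fm x z y := by
  simp only [fm, length_wconj]
  apply Finset.card_nbij' (x.length - ·) (x.length - ·)
  all_goals intro k hk
  all_goals simp only [Finset.mem_coe, Finset.mem_filter, Finset.mem_range] at hk ⊢
  · exact ⟨by omega, (fusion_split_wconj_iff x y z k).1 hk.2⟩
  · refine ⟨by omega, (fusion_split_wconj_iff x y z _).2 ?_⟩
    rw [Nat.sub_sub_self (by omega)]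
    exact hk.2
  · omega
  · omega
end

section
/- For all words x, y ∈ I, dim_q(xy) ≥ q^{−|y|}·dim_q(x), where xy denotes the concatenation of the words x and y. -/
open Filter Topology MeasureTheory

/-!
Appending one letter `c` to a word either opens a new block `[c]`, multiplying `dim_q` by
`[2]_q = q + q⁻¹`, or lengthens the last block from `n` to `n + 1` letters, replacing the factor
`[n+1]_q` by `[n+2]_q = q⁻¹[n+1]_q + q^{n+1}`. Either way `dim_q` grows at least by the factor
`q⁻¹`, and the theorem follows letter by letter.
-/

section QuantumIntegers

variable {q : ℝ}

lemma sub_inv_ne_zero (hq : 0 < q) (hq1 : q ≠ 1) : q - q⁻¹ ≠ 0 := by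
  rw [sub_ne_zero]
  intro h
  have hsq : q ^ 2 = 1 := by
    rw [sq]
    nth_rewrite 2 [h]
    exact mul_inv_cancel₀ hq.ne'
  exact hq1 ((pow_eq_one_iff_of_nonneg hq.le two_ne_zero).mp hsq)

lemma qnum_one (hq : 0 < q) (hq1 : q ≠ 1) : qnum q 1 = 1 := by
  simp only [qnum, pow_one]
  exact div_self (sub_inv_ne_zero hq hq1)

lemma qnum_add_two (hq : 0 < q) (hq1 : q ≠ 1) (n : ℕ) :
    qnum q (n + 2) = q⁻¹ * qnum q (n + 1) + q ^ (n + 1) := by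
  have key : q ^ (n + 2) - q⁻¹ ^ (n + 2)
      = q⁻¹ * (q ^ (n + 1) - q⁻¹ ^ (n + 1)) + q ^ (n + 1) * (q - q⁻¹) := by ring
  rw [qnum, qnum, key, add_div, mul_div_assoc, mul_div_cancel_right₀ _ (sub_inv_ne_zero hq hq1)]

lemma inv_mul_qnum_le_qnum_succ (hq : 0 < q) (hq1 : q ≠ 1) (n : ℕ) :
    q⁻¹ * qnum q (n + 1) ≤ qnum q (n + 2) := by
  rw [qnum_add_two hq hq1]
  exact le_add_of_nonneg_right (pow_pos hq _).le

lemma inv_le_qnum_two (hq : 0 < q) (hq1 : q ≠ 1) : q⁻¹ ≤ qnum q 2 := by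
  simpa [qnum_one hq hq1] using inv_mul_qnum_le_qnum_succ hq hq1 0

lemma qnum_succ_pos (hq : 0 < q) (hq1 : q ≠ 1) (n : ℕ) : 0 < qnum q (n + 1) := by
  induction n with
  | zero => simp [qnum_one hq hq1]
  | succ n ih =>
    rw [qnum_add_two hq hq1]
    exact add_pos (mul_pos (inv_pos.mpr hq) ih) (pow_pos hq _)

end QuantumIntegers

lemma exists_blocks_cons (a : Bool) (x : Word) :
    ∃ t bs, blocks (a :: x) = t :: bs ∧ t.head? = some a := by
  cases h : blocks x with
  | nil => exact ⟨[a], [], by simp [blocks, h], rfl⟩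
  | cons t bs =>
    by_cases ht : t.head? = some a
    · exact ⟨[a], t :: bs, by simp [blocks, h, ht], rfl⟩
    · exact ⟨a :: t, bs, by simp [blocks, h, ht], rfl⟩

lemma blocks_cons_cons_self (a : Bool) (x : Word) :
    blocks (a :: a :: x) = [a] :: blocks (a :: x) := by
  obtain ⟨t, bs, h, ht⟩ := exists_blocks_cons a x
  rw [blocks, h]
  simp [ht]

lemma blocks_cons_cons_of_ne {a b : Bool} (hab : a ≠ b) {x t : Word} {bs : List Word}
    (h : blocks (a :: x) = t :: bs) : blocks (b :: a :: x) = (b :: t) :: bs := by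
  obtain ⟨t', bs', h', ht'⟩ := exists_blocks_cons a x
  obtain ⟨rfl, rfl⟩ := List.cons.inj (h.symm.trans h')
  rw [blocks, h']
  simp [ht', hab]

/-- `dimqRun q b n x` continues the product defining `dimq` through `x`, starting inside a block
of length `n` whose last letter is `b`; the factors of the blocks before it are dropped. -/
noncomputable def dimqRun (q : ℝ) : Bool → ℕ → Word → ℝ
  | _, n, [] => qnum q (n + 1)
  | b, n, a :: x => if a = b then qnum q (n + 1) * dimqRun q a 1 x else dimqRun q a (n + 1) x

lemma dimqRun_eq_of_blocks_cons (q : ℝ) {b : Bool} {x t : Word} {bs : List Word}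
    (h : blocks (b :: x) = t :: bs) (n : ℕ) :
    dimqRun q b n x = qnum q (n + t.length) * (bs.map fun u => qnum q (u.length + 1)).prod := by
  induction x generalizing b n t bs with
  | nil =>
    obtain ⟨rfl, rfl⟩ : t = [b] ∧ bs = [] := by simpa [blocks] using h.symm
    simp [dimqRun]
  | cons a x ih =>
    obtain ⟨t', bs', h', -⟩ := exists_blocks_cons a x
    by_cases hab : a = b
    · subst hab
      rw [blocks_cons_cons_self, h'] at h
      obtain ⟨rfl, rfl⟩ := List.cons.inj h
      simp [dimqRun, ih h' 1, add_comm 1]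
    · rw [blocks_cons_cons_of_ne hab h'] at h
      obtain ⟨rfl, rfl⟩ := List.cons.inj h
      simp only [dimqRun, if_neg hab, ih h', List.length_cons, add_assoc, add_comm 1]

lemma dimq_cons (q : ℝ) (a : Bool) (x : Word) : dimq q (a :: x) = dimqRun q a 1 x := by
  obtain ⟨t, bs, h, -⟩ := exists_blocks_cons a x
  simp [dimq, h, dimqRun_eq_of_blocks_cons q h, add_comm 1]

section Growth

variable {q : ℝ}

lemma inv_mul_dimqRun_le_append_singleton (hq : 0 < q) (hq1 : q ≠ 1) (c : Bool) (x : Word)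
    (b : Bool) (n : ℕ) : q⁻¹ * dimqRun q b n x ≤ dimqRun q b n (x ++ [c]) := by
  induction x generalizing b n with
  | nil =>
    by_cases hcb : c = b
    · simpa [dimqRun, hcb, mul_comm] using
        mul_le_mul_of_nonneg_right (inv_le_qnum_two hq hq1) (qnum_succ_pos hq hq1 n).le
    · simpa [dimqRun, hcb] using inv_mul_qnum_le_qnum_succ hq hq1 n
  | cons a x ih =>
    by_cases hab : a = b
    · simpa [dimqRun, hab, mul_left_comm q⁻¹] using
        mul_le_mul_of_nonneg_left (ih b 1) (qnum_succ_pos hq hq1 n).le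
    · simpa [dimqRun, hab] using ih a (n + 1)

lemma inv_mul_dimq_le_append_singleton (hq : 0 < q) (hq1 : q ≠ 1) (x : Word) (c : Bool) :
    q⁻¹ * dimq q x ≤ dimq q (x ++ [c]) := by
  cases x with
  | nil => simpa [dimq, blocks] using inv_le_qnum_two hq hq1
  | cons a x =>
    rw [List.cons_append, dimq_cons, dimq_cons]
    exact inv_mul_dimqRun_le_append_singleton hq hq1 c x a 1

lemma inv_pow_length_mul_dimq_le_append (hq : 0 < q) (hq1 : q ≠ 1) (x y : Word) :
    q⁻¹ ^ y.length * dimq q x ≤ dimq q (x ++ y) := by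
  induction y generalizing x with
  | nil => simp
  | cons c y ih =>
    calc q⁻¹ ^ (c :: y).length * dimq q x
        = q⁻¹ ^ y.length * (q⁻¹ * dimq q x) := by rw [List.length_cons, pow_succ, mul_assoc]
      _ ≤ q⁻¹ ^ y.length * dimq q (x ++ [c]) :=
        mul_le_mul_of_nonneg_left (inv_mul_dimq_le_append_singleton hq hq1 x c)
          (pow_nonneg (inv_pos.mpr hq).le _)
      _ ≤ dimq q (x ++ c :: y) := by simpa using ih (x ++ [c])

end Growth

/-- `dim_q(xy) ≥ q^{-|y|}·dim_q(x)` for all words `x, y`. -/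
theorem dimq_concat_lower_bound (q : ℝ) (hq0 : 0 < q) (hq1 : q < 1) (x y : Word) :
    dimq q (x ++ y) ≥ q ^ (-(y.length : ℤ)) * dimq q x := by
  rw [zpow_neg, zpow_natCast, ← inv_pow]
  exact inv_pow_length_mul_dimq_le_append hq0 hq1.ne x y
end

section
/- For all fixed x, y ∈ I, the map ∂I → ℝ given by w ↦ D_w(x, y) is continuous. -/
open Filter Topology MeasureTheory

/-- The word `[w]_n` formed by the first `n` letters of an infinite word `w ∈ ∂I`. -/
def bprefix (w : ℕ → Bool) (n : ℕ) : Word := (List.range n).map w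

/-- `D_w(x, y) = lim_n dim_q(x[w]_n)/dim_q(y[w]_n)` for `x, y ∈ I` and `w ∈ ∂I`. -/
noncomputable def Dw (q : ℝ) (x y : Word) (w : ℕ → Bool) : ℝ :=
  limUnder atTop (fun n => dimq q (x ++ bprefix w n) / dimq q (y ++ bprefix w n))

/-- Concatenation of a finite word with an infinite word. -/
def bcat (z : Word) (u : ℕ → Bool) : ℕ → Bool :=
  fun n => if n < z.length then z.getD n false else u (n - z.length)

/-- The strictly alternating infinite word starting with the letter `a`. -/
def walt (a : Bool) : ℕ → Bool := fun n => if n % 2 = 0 then a else !a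

/-- `(x|w)`: the length of the longest common prefix of a finite word `x` and an
infinite word `w`. -/
def cpb : Word → (ℕ → Bool) → ℕ
  | [], _ => 0
  | a :: xs, w => if a = w 0 then cpb xs (fun n => w (n + 1)) + 1 else 0

/-!
Appending a word `v` with first letter `a` to `x` only affects the last block of `x`, which
merges with the first alternating block of `v` when its last letter differs from `a`; the other
blocks of `v` contribute the same factor to `dim_q(xv)` and `dim_q(yv)`. Hence
`dim_q(x[w]_n) / dim_q(y[w]_n) = r_{w₀}(ℓₙ)`, where `ℓₙ` is the length of the first block of
`[w]_n`, and `r_a(ℓ)` converges as `ℓ → ∞` because `[m+ℓ]_q / [m'+ℓ]_q → q^(m'-m)`.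
For `m, n ≥ N` the lengths `ℓₘ, ℓₙ` either agree or are both `≥ N`, so these ratios, which are
locally constant in `w`, are uniformly Cauchy; their uniform limit `w ↦ D_w(x, y)` is continuous.
-/

def consBlock (a : Bool) : List Word → List Word
  | [] => [[a]]
  | b :: bs => if b.head? = some a then [a] :: b :: bs else (a :: b) :: bs

lemma blocks_cons (a : Bool) (t : Word) : blocks (a :: t) = consBlock a (blocks t) := by
  cases h : blocks t <;> simp [blocks, consBlock, h]

lemma ne_nil_of_mem_consBlock {a : Bool} {L : List Word} (hL : ∀ b ∈ L, b ≠ [])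
    {b : Word} (hb : b ∈ consBlock a L) : b ≠ [] := by
  cases L with
  | nil => simp_all [consBlock]
  | cons c cs => simp only [consBlock] at hb; split_ifs at hb <;> grind

lemma ne_nil_of_mem_blocks {z b : Word} (hb : b ∈ blocks z) : b ≠ [] := by
  induction z generalizing b with
  | nil => simp [blocks] at hb
  | cons a t ih => exact ne_nil_of_mem_consBlock (fun _ => ih) (blocks_cons a t ▸ hb)

def glueBlocks : List Word → List Word → List Word
  | [], M => M
  | [b], [] => [b]
  | [b], c :: cs => if b.getLast? = c.head? then b :: c :: cs else (b ++ c) :: cs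
  | b :: b' :: bs, M => b :: glueBlocks (b' :: bs) M

lemma consBlock_glueBlocks (a : Bool) :
    ∀ (L M : List Word), (∀ b ∈ L, b ≠ []) →
      consBlock a (glueBlocks L M) = glueBlocks (consBlock a L) M
  | [], [], _ => rfl
  | [], c :: cs, _ => by
    by_cases h : c.head? = some a <;> simp [glueBlocks, consBlock, h, eq_comm]
  | [b], [], _ => by simp only [glueBlocks, consBlock]; split_ifs <;> rfl
  | [b], c :: cs, hL => by
    obtain ⟨d, b, rfl⟩ := List.exists_cons_of_ne_nil (hL _ (List.mem_singleton_self _))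
    simp only [glueBlocks, consBlock]
    split_ifs <;> simp_all [glueBlocks, List.getLast?_cons_cons]
  | b :: b' :: bs, M, _ => by simp only [glueBlocks, consBlock]; split_ifs <;> rfl

lemma blocks_append (z v : Word) : blocks (z ++ v) = glueBlocks (blocks z) (blocks v) := by
  induction z with
  | nil => rfl
  | cons a t ih =>
    rw [List.cons_append, blocks_cons, ih, blocks_cons,
      consBlock_glueBlocks a _ _ fun _ => ne_nil_of_mem_blocks]

noncomputable def blockDim (q : ℝ) (L : List Word) : ℝ :=
  (L.map fun b => qnum q (b.length + 1)).prod

lemma blockDim_cons (q : ℝ) (b : Word) (L : List Word) :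
    blockDim q (b :: L) = qnum q (b.length + 1) * blockDim q L := by
  simp [blockDim]

lemma qnum_pos {q : ℝ} (hq0 : 0 < q) (hq1 : q < 1) {n : ℕ} (hn : n ≠ 0) : 0 < qnum q n := by
  have hq : q < q⁻¹ := hq1.trans ((one_lt_inv₀ hq0).2 hq1)
  exact div_pos_of_neg_of_neg (sub_neg.2 (pow_lt_pow_left₀ hq hq0.le hn)) (sub_neg.2 hq)

lemma blockDim_pos {q : ℝ} (hq0 : 0 < q) (hq1 : q < 1) (L : List Word) : 0 < blockDim q L :=
  List.prod_pos fun _ h => by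
    obtain ⟨b, -, rfl⟩ := List.mem_map.1 h
    exact qnum_pos hq0 hq1 b.length.succ_ne_zero

def mergeLen (a : Bool) : List Word → ℕ
  | [] => 0
  | [b] => if b.getLast? = some a then 0 else b.length
  | _ :: b :: L => mergeLen a (b :: L)

noncomputable def mergeCoeff (q : ℝ) (a : Bool) : List Word → ℝ
  | [] => 1
  | [b] => if b.getLast? = some a then qnum q (b.length + 1) else 1
  | c :: b :: L => qnum q (c.length + 1) * mergeCoeff q a (b :: L)

lemma blockDim_glueBlocks_singleton (q : ℝ) {a : Bool} {c : Word} (hc : c.head? = some a) :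
    ∀ L : List Word, blockDim q (glueBlocks L [c]) =
      mergeCoeff q a L * qnum q (mergeLen a L + (c.length + 1))
  | [] => by simp [glueBlocks, blockDim, mergeCoeff, mergeLen]
  | [b] => by
    by_cases h : b.getLast? = some a <;>
      simp [glueBlocks, hc, h, blockDim, mergeCoeff, mergeLen, Nat.add_assoc]
  | b :: b' :: L => by
    rw [glueBlocks, blockDim_cons, blockDim_glueBlocks_singleton q hc (b' :: L), mergeCoeff,
      mergeLen, mul_assoc]

lemma blockDim_glueBlocks_cons (q : ℝ) (c : Word) (cs : List Word) :
    ∀ L : List Word,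
      blockDim q (glueBlocks L (c :: cs)) = blockDim q (glueBlocks L [c]) * blockDim q cs
  | [] => by simp [glueBlocks, blockDim]
  | [b] => by
    by_cases h : b.getLast? = c.head? <;> simp [glueBlocks, h, blockDim, mul_assoc]
  | b :: b' :: L => by
    rw [glueBlocks, glueBlocks, blockDim_cons, blockDim_cons,
      blockDim_glueBlocks_cons q c cs (b' :: L), mul_assoc]

def firstBlock : Word → Word
  | [] => []
  | [a] => [a]
  | a :: b :: t => if b = a then [a] else a :: firstBlock (b :: t)

lemma firstBlock_cons : ∀ (a : Bool) (t : Word), ∃ r, firstBlock (a :: t) = a :: r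
  | _, [] => ⟨[], rfl⟩
  | a, b :: t => by unfold firstBlock; split_ifs <;> exact ⟨_, rfl⟩

lemma blocks_eq_firstBlock_cons : ∀ (a : Bool) (t : Word),
    ∃ cs, blocks (a :: t) = firstBlock (a :: t) :: cs
  | _, [] => ⟨[], rfl⟩
  | a, b :: t => by
    obtain ⟨cs, hcs⟩ := blocks_eq_firstBlock_cons b t
    obtain ⟨r, hr⟩ := firstBlock_cons b t
    rw [blocks_cons, hcs, firstBlock, hr]
    by_cases hba : b = a
    · exact ⟨(b :: r) :: cs, by simp [consBlock, hba]⟩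
    · exact ⟨cs, by simp [consBlock, hba]⟩

lemma firstBlock_prefix_append : ∀ u v : Word, firstBlock u <+: firstBlock (u ++ v)
  | [], _ => List.nil_prefix
  | [a], v => by
    obtain ⟨r, hr⟩ := firstBlock_cons a v
    simp [firstBlock, hr]
  | a :: b :: t, v => by
    simp only [List.cons_append, firstBlock]
    split_ifs
    · exact List.prefix_rfl
    · exact (List.prefix_cons_inj a).2 (firstBlock_prefix_append (b :: t) v)

lemma firstBlock_append_of_ne : ∀ {u : Word} (v : Word), firstBlock u ≠ u →
    firstBlock (u ++ v) = firstBlock u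
  | [], _, h | [_], _, h => absurd rfl h
  | a :: b :: t, v, h => by
    simp only [List.cons_append, firstBlock] at h ⊢
    split_ifs at h ⊢
    · rfl
    · rw [← List.cons_append, firstBlock_append_of_ne v fun h' => h (by rw [h'])]

noncomputable def glueRatio (q : ℝ) (x y : Word) (a : Bool) (ℓ : ℕ) : ℝ :=
  mergeCoeff q a (blocks x) / mergeCoeff q a (blocks y) *
    (qnum q (mergeLen a (blocks x) + ℓ) / qnum q (mergeLen a (blocks y) + ℓ))

lemma dimq_append_div_dimq_append {q : ℝ} (hq0 : 0 < q) (hq1 : q < 1) (x y : Word) (a : Bool)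
    (t : Word) :
    dimq q (x ++ a :: t) / dimq q (y ++ a :: t) =
      glueRatio q x y a ((firstBlock (a :: t)).length + 1) := by
  obtain ⟨cs, hcs⟩ := blocks_eq_firstBlock_cons a t
  obtain ⟨r, hr⟩ := firstBlock_cons a t
  have hhead : (firstBlock (a :: t)).head? = some a := by rw [hr]; rfl
  have key : ∀ z : Word, dimq q (z ++ a :: t) = mergeCoeff q a (blocks z) *
      qnum q (mergeLen a (blocks z) + ((firstBlock (a :: t)).length + 1)) * blockDim q cs := by
    intro z
    change blockDim q (blocks (z ++ a :: t)) = _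
    rw [blocks_append, hcs, blockDim_glueBlocks_cons, blockDim_glueBlocks_singleton q hhead]
  rw [key, key, mul_div_mul_right _ _ (blockDim_pos hq0 hq1 cs).ne', mul_div_mul_comm]
  rfl

lemma tendsto_qnum_add_mul_pow {q : ℝ} (hq0 : 0 < q) (hq1 : q < 1) (m : ℕ) :
    Tendsto (fun ℓ => qnum q (m + ℓ) * q ^ ℓ) atTop (𝓝 (q⁻¹ ^ m / (q⁻¹ - q))) := by
  have hform : ∀ ℓ, qnum q (m + ℓ) * q ^ ℓ = (q⁻¹ ^ m - q ^ m * (q ^ 2) ^ ℓ) / (q⁻¹ - q) := by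
    intro ℓ
    have h1 : q⁻¹ ^ (m + ℓ) * q ^ ℓ = q⁻¹ ^ m := by
      rw [pow_add, mul_assoc, ← mul_pow, inv_mul_cancel₀ hq0.ne', one_pow, mul_one]
    have h2 : q ^ (m + ℓ) * q ^ ℓ = q ^ m * (q ^ 2) ^ ℓ := by ring
    rw [qnum, div_mul_eq_mul_div, sub_mul, h1, h2, ← neg_sub, neg_div, ← div_neg, neg_sub]
  simp only [hform]
  have hpow : Tendsto (fun ℓ : ℕ => (q ^ 2) ^ ℓ) atTop (𝓝 0) :=
    tendsto_pow_atTop_nhds_zero_of_lt_one (by positivity) (by nlinarith)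
  simpa using (tendsto_const_nhds.sub (hpow.const_mul (q ^ m))).div_const (q⁻¹ - q)

lemma tendsto_qnum_add_div_qnum_add {q : ℝ} (hq0 : 0 < q) (hq1 : q < 1) (m m' : ℕ) :
    Tendsto (fun ℓ => qnum q (m + ℓ) / qnum q (m' + ℓ)) atTop
      (𝓝 (q⁻¹ ^ m / q⁻¹ ^ m')) := by
  have hq : q⁻¹ - q ≠ 0 := (sub_pos.2 (hq1.trans ((one_lt_inv₀ hq0).2 hq1))).ne'
  have hform : ∀ ℓ, qnum q (m + ℓ) / qnum q (m' + ℓ) =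
      (qnum q (m + ℓ) * q ^ ℓ) / (qnum q (m' + ℓ) * q ^ ℓ) := fun ℓ =>
    (mul_div_mul_right _ _ (pow_ne_zero ℓ hq0.ne')).symm
  simp only [hform]
  have h := (tendsto_qnum_add_mul_pow hq0 hq1 m).div (tendsto_qnum_add_mul_pow hq0 hq1 m')
    (div_ne_zero (pow_ne_zero _ (inv_ne_zero hq0.ne')) hq)
  rwa [div_div_div_cancel_right₀ hq] at h

lemma cauchySeq_glueRatio {q : ℝ} (hq0 : 0 < q) (hq1 : q < 1) (x y : Word) :
    CauchySeq fun ℓ a => glueRatio q x y a ℓ :=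
  (tendsto_pi_nhds.2 fun _ =>
    (tendsto_qnum_add_div_qnum_add hq0 hq1 _ _).const_mul _).cauchySeq

lemma bprefix_succ (w : ℕ → Bool) (n : ℕ) :
    bprefix w (n + 1) = w 0 :: bprefix (fun i => w (i + 1)) n := by
  simp [bprefix, List.range_succ_eq_map, List.map_map, Function.comp_def]

lemma length_bprefix (w : ℕ → Bool) (n : ℕ) : (bprefix w n).length = n := by
  simp [bprefix]

lemma bprefix_add (w : ℕ → Bool) (n k : ℕ) :
    bprefix w (n + k) = bprefix w n ++ bprefix (fun i => w (n + i)) k := by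
  simp [bprefix, List.range_add, Function.comp_def]

lemma length_firstBlock_bprefix_eq_or {w : ℕ → Bool} {N n m : ℕ} (hn : N ≤ n) (hm : N ≤ m) :
    (firstBlock (bprefix w n)).length = (firstBlock (bprefix w m)).length ∨
      N ≤ (firstBlock (bprefix w n)).length ∧ N ≤ (firstBlock (bprefix w m)).length := by
  wlog hnm : n ≤ m generalizing n m
  · exact (this hm hn (le_of_not_ge hnm)).imp Eq.symm And.symm
  obtain ⟨k, rfl⟩ := Nat.exists_eq_add_of_le hnm
  rw [bprefix_add]
  by_cases hfb : firstBlock (bprefix w n) = bprefix w n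
  · have hle := (firstBlock_prefix_append (bprefix w n) (bprefix (fun i => w (n + i)) k)).length_le
    rw [hfb, length_bprefix] at hle ⊢
    exact Or.inr ⟨hn, hn.trans hle⟩
  · exact Or.inl (by rw [firstBlock_append_of_ne _ hfb])

lemma dimq_append_bprefix_div {q : ℝ} (hq0 : 0 < q) (hq1 : q < 1) (x y : Word) (w : ℕ → Bool)
    {n : ℕ} (hn : n ≠ 0) :
    dimq q (x ++ bprefix w n) / dimq q (y ++ bprefix w n) =
      glueRatio q x y (w 0) ((firstBlock (bprefix w n)).length + 1) := by
  obtain ⟨n, rfl⟩ := Nat.exists_eq_succ_of_ne_zero hn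
  rw [bprefix_succ]
  exact dimq_append_div_dimq_append hq0 hq1 x y _ _

lemma uniformCauchySeqOn_dimq_append_bprefix {q : ℝ} (hq0 : 0 < q) (hq1 : q < 1) (x y : Word) :
    UniformCauchySeqOn (fun n w => dimq q (x ++ bprefix w n) / dimq q (y ++ bprefix w n))
      atTop Set.univ := by
  rw [Metric.uniformCauchySeqOn_iff]
  intro ε hε
  obtain ⟨N, hN⟩ := Metric.cauchySeq_iff.1 (cauchySeq_glueRatio hq0 hq1 x y) ε hε
  refine ⟨N + 1, fun m hm n hn w _ => ?_⟩
  rw [dimq_append_bprefix_div hq0 hq1 x y w (by omega : m ≠ 0),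
    dimq_append_bprefix_div hq0 hq1 x y w (by omega : n ≠ 0)]
  rcases length_firstBlock_bprefix_eq_or (w := w) hm hn with h | ⟨hm', hn'⟩
  · rwa [h, dist_self]
  · exact (dist_le_pi_dist _ _ (w 0)).trans_lt (hN _ (by omega) _ (by omega))

lemma continuous_comp_bprefix {X : Type*} [TopologicalSpace X] (g : Word → X) (n : ℕ) :
    Continuous fun w => g (bprefix w n) := by
  refine (IsLocallyConstant.iff_eventually_eq _).2 (fun w => ?_) |>.continuous
  have h : ∀ i ∈ Set.Iio n, ∀ᶠ w' in 𝓝 w, w' i = w i := fun i _ =>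
    (continuous_apply i).continuousAt.eventually_mem ((isOpen_discrete {w i}).mem_nhds rfl)
  filter_upwards [(eventually_all_finite (Set.finite_Iio n)).2 h] with w' hw'
  exact congrArg g (List.map_congr_left fun i hi => hw' i (List.mem_range.1 hi))

theorem continuous_limUnder_of_uniformCauchySeqOn {X Y ι : Type*} [TopologicalSpace X]
    [UniformSpace Y] [CompleteSpace Y] [Nonempty Y] [SemilatticeSup ι] [Nonempty ι]
    {F : ι → X → Y} (hF : ∀ i, Continuous (F i)) (hu : UniformCauchySeqOn F atTop Set.univ) :
    Continuous fun x => limUnder atTop fun i => F i x :=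
  (tendstoUniformlyOn_univ.1 (hu.tendstoUniformlyOn_of_tendsto fun _ hx =>
    tendsto_nhds_limUnder (cauchySeq_tendsto_of_complete (hu.cauchySeq hx)))).continuous
    (Frequently.of_forall hF)

/-- For all fixed `x, y ∈ I`, the map `∂I → ℝ`, `w ↦ D_w(x, y)` is
continuous (for the product topology on `∂I = ℕ → {α, β}`). -/
theorem Dw_continuous (q : ℝ) (hq0 : 0 < q) (hq1 : q < 1) (x y : Word) :
    Continuous (fun w : ℕ → Bool => Dw q x y w) :=
  continuous_limUnder_of_uniformCauchySeqOn
    (fun n => continuous_comp_bprefix (fun v => dimq q (x ++ v) / dimq q (y ++ v)) n)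
    (uniformCauchySeqOn_dimq_append_bprefix hq0 hq1 x y)
end
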